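/- Let −1 < δ < 1, δ ≠ 0, and set c = −(1+δ²)/(1−δ²). Define V_n(x) = ((1+δ)/2)U_n(x) + ((1−δ)/2)U_{n−1}(x) with U_{−1}=0. Then for all n ≥ 0: V_{n+1}(c)/V_n(c) = (δ+1)/(δ−1). -/

import Mathlib

/-- Chebyshev polynomials of the second kind:
`U 0 x = 1`, `U 1 x = 2x`, `U (n+2) x = 2x * U (n+1) x - U n x`. -/
noncomputable def chebU : ℕ → ℝ → ℝ
  | 0, _ => 1
  | 1, x => 2 * x
  | n + 2, x => 2 * x * chebU (n + 1) x - chebU n x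

/-- `V n x = ((1+δ)/2) U n x + ((1−δ)/2) U (n−1) x`, with the convention `U_{-1} = 0`. -/
noncomputable def chebV (δ : ℝ) : ℕ → ℝ → ℝ
  | 0, x => (1 + δ) / 2 * chebU 0 x
  | n + 1, x => (1 + δ) / 2 * chebU (n + 1) x + (1 - δ) / 2 * chebU n x

/-!
`V_n` obeys the Chebyshev recurrence `V_{n+2} = 2x V_{n+1} - V_n`, whose characteristic roots at
`x = c` are `r = (δ+1)/(δ-1)` and `r⁻¹`, since `r + r⁻¹ = 2c`. The initial values satisfy
`V_1(c) = r V_0(c)`, so only the root `r` is excited and `V_n(c) = V_0(c) rⁿ` with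
`V_0(c) = (1+δ)/2 ≠ 0`.
-/

theorem eq_mul_pow_of_recurrence {K : Type*} [Field K] {f : ℕ → K} {x r : K} (hr : r ≠ 0)
    (hx : 2 * x = r + r⁻¹) (hf : ∀ n, f (n + 2) = 2 * x * f (n + 1) - f n)
    (h1 : f 1 = r * f 0) (n : ℕ) : f n = f 0 * r ^ n := by
  induction n using Nat.twoStepInduction with
  | zero => simp
  | one => rw [h1, pow_one, mul_comm]
  | more m ih0 ih1 =>
    rw [hf, ih0, ih1, hx]
    field_simp
    ring

theorem chebV_succ_succ (δ x : ℝ) (n : ℕ) :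
    chebV δ (n + 2) x = 2 * x * chebV δ (n + 1) x - chebV δ n x := by
  cases n <;> simp only [chebV, chebU] <;> ring

theorem two_mul_eq_add_inv {δ : ℝ} (hm : δ - 1 ≠ 0) (hp : δ + 1 ≠ 0) :
    2 * (-(1 + δ ^ 2) / (1 - δ ^ 2)) = (δ + 1) / (δ - 1) + ((δ + 1) / (δ - 1))⁻¹ := by
  have hsq : 1 - δ ^ 2 ≠ 0 := by
    rw [show 1 - δ ^ 2 = -((δ - 1) * (δ + 1)) by ring]
    exact neg_ne_zero.mpr (mul_ne_zero hm hp)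
  field_simp
  ring

theorem chebV_one_eq_mul_chebV_zero {δ : ℝ} (hm : δ - 1 ≠ 0) (hp : δ + 1 ≠ 0) :
    chebV δ 1 (-(1 + δ ^ 2) / (1 - δ ^ 2)) =
      (δ + 1) / (δ - 1) * chebV δ 0 (-(1 + δ ^ 2) / (1 - δ ^ 2)) := by
  have hsq : 1 - δ ^ 2 = -((δ - 1) * (δ + 1)) := by ring
  simp only [chebV, chebU, hsq]
  field_simp
  ring

theorem chebV_eq_mul_pow {δ : ℝ} (hm : δ - 1 ≠ 0) (hp : δ + 1 ≠ 0) (n : ℕ) :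
    chebV δ n (-(1 + δ ^ 2) / (1 - δ ^ 2)) =
      chebV δ 0 (-(1 + δ ^ 2) / (1 - δ ^ 2)) * ((δ + 1) / (δ - 1)) ^ n :=
  eq_mul_pow_of_recurrence (f := fun n ↦ chebV δ n (-(1 + δ ^ 2) / (1 - δ ^ 2)))
    (div_ne_zero hp hm) (two_mul_eq_add_inv hm hp) (chebV_succ_succ δ _) (chebV_one_eq_mul_chebV_zero hm hp) n

theorem chebV_ratio_general (δ : ℝ) (hδ1 : -1 < δ) (hδ2 : δ < 1) (n : ℕ) :
    chebV δ (n + 1) (-(1 + δ ^ 2) / (1 - δ ^ 2)) / chebV δ n (-(1 + δ ^ 2) / (1 - δ ^ 2)) =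
      (δ + 1) / (δ - 1) := by
  have hm : δ - 1 ≠ 0 := by linarith
  have hp : δ + 1 ≠ 0 := by linarith
  have hV0 : chebV δ 0 (-(1 + δ ^ 2) / (1 - δ ^ 2)) ≠ 0 := by
    simp only [chebV, chebU, mul_one]
    exact div_ne_zero (by linarith) two_ne_zero
  rw [chebV_eq_mul_pow hm hp (n + 1), chebV_eq_mul_pow hm hp n, pow_succ _ n, ← mul_assoc,
    mul_div_cancel_left₀ _ (mul_ne_zero hV0 (pow_ne_zero n (div_ne_zero hp hm)))]

theorem chebV_ratio (δ : ℝ) (hδ1 : -1 < δ) (hδ2 : δ < 1) (hδ0 : δ ≠ 0) (n : ℕ) :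
    chebV δ (n + 1) (-(1 + δ ^ 2) / (1 - δ ^ 2)) / chebV δ n (-(1 + δ ^ 2) / (1 - δ ^ 2)) =
      (δ + 1) / (δ - 1) :=
  chebV_ratio_general δ hδ1 hδ2 n
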